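/- Let X be a real n×p matrix, y ∈ ℝⁿ, λ₂ > 0, and k a positive integer. Suppose M₁ > 0 is a restricted smoothness parameter of L_ridge with support size 1 and m_{2k} > 0 is a restricted strong convexity parameter of L_ridge with support size 2k. Let β* be a minimizer of L_ridge over {β ∈ ℝᵖ : ‖β‖₀ ≤ k}, and let β ∈ ℝᵖ satisfy ‖β‖₀ ≤ k and ∇_j L_ridge(β) = 0 for all j ∈ supp(β). Then L_ridge(β) − inf_{j ∈ {1,…,p}, α ∈ ℝ} L_ridge(β + α e_j) ≥ (m_{2k}/(k M₁)) (L_ridge(β) − L_ridge(β*)), where e_j is the j-th standard basis vector. -/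

import Mathlib

open Matrix

noncomputable section

/-- The ridge loss `L_ridge(β) = βᵀXᵀXβ − 2yᵀXβ + λ₂‖β‖₂²`. -/
def Lridge {n p : ℕ} (X : Matrix (Fin n) (Fin p) ℝ) (y : Fin n → ℝ) (lam2 : ℝ)
    (β : Fin p → ℝ) : ℝ :=
  β ⬝ᵥ (Xᵀ * X).mulVec β - 2 * (y ⬝ᵥ X.mulVec β) + lam2 * ∑ j, (β j) ^ 2

/-- The gradient `∇L_ridge(β) = 2Xᵀ(Xβ − y) + 2λ₂β`. -/
def gradLridge {n p : ℕ} (X : Matrix (Fin n) (Fin p) ℝ) (y : Fin n → ℝ) (lam2 : ℝ)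
    (β : Fin p → ℝ) : Fin p → ℝ :=
  (2 : ℝ) • Xᵀ.mulVec (X.mulVec β - y) + (2 * lam2) • β

lemma symm_dot {n p : ℕ} (X : Matrix (Fin n) (Fin p) ℝ) (β δ : Fin p → ℝ) :
    δ ⬝ᵥ (Xᵀ * X).mulVec β = β ⬝ᵥ (Xᵀ * X).mulVec δ := by
  have hT : (Xᵀ * X)ᵀ = Xᵀ * X := by simp [Matrix.transpose_mul]
  rw [Matrix.dotProduct_mulVec, ← Matrix.mulVec_transpose, hT, dotProduct_comm,
    Matrix.dotProduct_mulVec, ← Matrix.mulVec_transpose, hT, dotProduct_comm]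

lemma expandL {n p : ℕ} (X : Matrix (Fin n) (Fin p) ℝ) (y : Fin n → ℝ) (lam2 : ℝ)
    (β δ : Fin p → ℝ) :
    Lridge X y lam2 (β + δ) = Lridge X y lam2 β + gradLridge X y lam2 β ⬝ᵥ δ
      + (δ ⬝ᵥ (Xᵀ * X).mulVec δ + lam2 * ∑ j, (δ j) ^ 2) := by
  have hsym := symm_dot X β δ
  have hgrad : gradLridge X y lam2 β ⬝ᵥ δ
      = 2 * (β ⬝ᵥ (Xᵀ * X).mulVec δ) - 2 * (y ⬝ᵥ X.mulVec δ) + 2 * lam2 * (β ⬝ᵥ δ) := by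
    simp only [gradLridge, add_dotProduct, smul_dotProduct, smul_eq_mul]
    have h1 : (Xᵀ *ᵥ (X *ᵥ β - y)) ⬝ᵥ δ = β ⬝ᵥ (Xᵀ * X) *ᵥ δ - y ⬝ᵥ X *ᵥ δ := by
      rw [Matrix.mulVec_sub, sub_dotProduct]
      congr 1
      · rw [Matrix.mulVec_mulVec, dotProduct_comm]; exact hsym
      · rw [dotProduct_comm, Matrix.dotProduct_mulVec, Matrix.vecMul_transpose, dotProduct_comm]
    rw [h1]; ring
  have hsq : ∑ j, (β j + δ j) ^ 2
      = ∑ j, (β j) ^ 2 + 2 * (β ⬝ᵥ δ) + ∑ j, (δ j) ^ 2 := by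
    simp only [add_sq, Finset.sum_add_distrib, dotProduct, Finset.mul_sum]
    ring_nf
  simp only [Lridge, Matrix.mulVec_add, dotProduct_add, add_dotProduct, Pi.add_apply]
  rw [hsq, hgrad, hsym]
  ring

lemma Lridge_lb {n p : ℕ} (X : Matrix (Fin n) (Fin p) ℝ) (y : Fin n → ℝ) (lam2 : ℝ)
    (hlam2 : 0 < lam2) (γ : Fin p → ℝ) : -(∑ i, (y i) ^ 2) ≤ Lridge X y lam2 γ := by
  have h1 : γ ⬝ᵥ (Xᵀ * X).mulVec γ = ∑ i, (X.mulVec γ i) ^ 2 := by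
    rw [Matrix.dotProduct_mulVec, ← Matrix.vecMul_vecMul, Matrix.vecMul_transpose,
      ← Matrix.dotProduct_mulVec]
    simp [dotProduct, sq]
  have h2 : y ⬝ᵥ X.mulVec γ = ∑ i, y i * X.mulVec γ i := rfl
  have h3 : (0:ℝ) ≤ ∑ i, (X.mulVec γ i - y i) ^ 2 :=
    Finset.sum_nonneg fun i _ => sq_nonneg _
  have h4 : (0:ℝ) ≤ lam2 * ∑ j, (γ j) ^ 2 :=
    mul_nonneg hlam2.le (Finset.sum_nonneg fun i _ => sq_nonneg _)
  have h5 : ∑ i, (X.mulVec γ i - y i) ^ 2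
      = ∑ i, (X.mulVec γ i) ^ 2 - 2 * ∑ i, y i * X.mulVec γ i + ∑ i, (y i) ^ 2 := by
    simp only [sub_sq, Finset.sum_add_distrib, Finset.sum_sub_distrib, Finset.mul_sum,
      mul_comm, mul_left_comm]
    ring_nf
  unfold Lridge
  rw [h1, h2]
  nlinarith [h3, h4, h5]

lemma supp_single {p : ℕ} (j : Fin p) (c : ℝ) :
    (Function.support (c • (Pi.single j 1 : Fin p → ℝ))).ncard ≤ 1 := by
  have h : Function.support (c • (Pi.single j 1 : Fin p → ℝ)) ⊆ {j} := by
    intro x hx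
    simp only [Function.mem_support, Pi.smul_apply, smul_eq_mul, ne_eq] at hx
    by_contra hxj
    simp only [Set.mem_singleton_iff] at hxj
    rw [Pi.single_apply, if_neg hxj, mul_zero] at hx
    exact hx rfl
  calc (Function.support (c • (Pi.single j 1 : Fin p → ℝ))).ncard
      ≤ ({j} : Set (Fin p)).ncard := Set.ncard_le_ncard h (Set.finite_singleton j)
    _ = 1 := Set.ncard_singleton j

/-- One step of greedy forward selection decreases the ridge loss by at least
`(m_{2k}/(k M₁))` times the current suboptimality gap. -/
theorem stmt15 {n p : ℕ} (X : Matrix (Fin n) (Fin p) ℝ) (y : Fin n → ℝ)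
    (lam2 : ℝ) (hlam2 : 0 < lam2) (k : ℕ) (hk : 0 < k)
    (M1 : ℝ) (hM1pos : 0 < M1)
    (hM1 : ∀ u v : Fin p → ℝ,
      (Function.support u).ncard ≤ 1 → (Function.support v).ncard ≤ 1 →
      (Function.support (u - v)).ncard ≤ 1 →
      Lridge X y lam2 v
        ≤ Lridge X y lam2 u + gradLridge X y lam2 u ⬝ᵥ (v - u)
          + M1 / 2 * ∑ j, (v j - u j) ^ 2)
    (m2k : ℝ) (hm2kpos : 0 < m2k)
    (hrsc : ∀ u v : Fin p → ℝ,
      (Function.support u).ncard ≤ 2 * k → (Function.support v).ncard ≤ 2 * k →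
      (Function.support (u - v)).ncard ≤ 2 * k →
      Lridge X y lam2 u + gradLridge X y lam2 u ⬝ᵥ (v - u)
          + m2k / 2 * ∑ j, (v j - u j) ^ 2
        ≤ Lridge X y lam2 v)
    (βstar : Fin p → ℝ) (hβstar : (Function.support βstar).ncard ≤ k)
    (hβstarMin : ∀ γ : Fin p → ℝ, (Function.support γ).ncard ≤ k →
      Lridge X y lam2 βstar ≤ Lridge X y lam2 γ)
    (β : Fin p → ℝ) (hβ : (Function.support β).ncard ≤ k)
    (hstat : ∀ j, β j ≠ 0 → gradLridge X y lam2 β j = 0) :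
    m2k / ((k : ℝ) * M1) * (Lridge X y lam2 β - Lridge X y lam2 βstar)
      ≤ Lridge X y lam2 β
        - ⨅ jα : Fin p × ℝ, Lridge X y lam2 (β + jα.2 • (Pi.single jα.1 1 : Fin p → ℝ)) := by
  rcases Nat.eq_zero_or_pos p with hp | hp
  · -- degenerate case p = 0
    subst hp
    have hempty : IsEmpty (Fin 0 × ℝ) := by infer_instance
    have hzero : ∀ γ : Fin 0 → ℝ, Lridge X y lam2 γ = 0 := by
      intro γ
      simp [Lridge, dotProduct, Matrix.mulVec, Finset.sum_empty]
    rw [hzero β, hzero βstar, Real.iInf_of_isEmpty]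
    simp
  set L := Lridge X y lam2 with hL
  set g := gradLridge X y lam2 β with hg
  set inf := ⨅ jα : Fin p × ℝ, L (β + jα.2 • (Pi.single jα.1 1 : Fin p → ℝ)) with hinf
  have hbdd : BddBelow (Set.range fun jα : Fin p × ℝ =>
      L (β + jα.2 • (Pi.single jα.1 1 : Fin p → ℝ))) := by
    refine ⟨-(∑ i, (y i) ^ 2), ?_⟩
    rintro x ⟨jα, rfl⟩
    exact Lridge_lb X y lam2 hlam2 _
  have hinfle : ∀ (j : Fin p) (α : ℝ),
      inf ≤ L (β + α • (Pi.single j 1 : Fin p → ℝ)) := fun j α =>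
    ciInf_le hbdd (j, α)
  have hgap0 : 0 ≤ L β - inf := by
    have := hinfle ⟨0, hp⟩ 0
    simp only [zero_smul, add_zero] at this
    linarith
  set gap := L β - inf with hgapdef
  -- diagonal bound: Q(e_j) ≤ M1/2
  have hQ : ∀ j : Fin p, (Pi.single j 1 : Fin p → ℝ) ⬝ᵥ (Xᵀ * X).mulVec (Pi.single j 1)
      + lam2 * ∑ i, ((Pi.single j 1 : Fin p → ℝ) i) ^ 2 ≤ M1 / 2 := by
    intro j
    have hs1 : ∑ i, ((Pi.single j 1 : Fin p → ℝ) i) ^ 2 = 1 := by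
      simp [Pi.single_apply, sq]
    have h0 : (Function.support (0 : Fin p → ℝ)).ncard ≤ 1 := by
      simp [Function.support_zero]
    have hsingle : (Function.support (Pi.single j 1 : Fin p → ℝ)).ncard ≤ 1 := by
      have := supp_single j 1
      simpa using this
    have hsub : (Function.support ((0 : Fin p → ℝ) - Pi.single j 1)).ncard ≤ 1 := by
      have h := supp_single j (-1)
      have he : (0 : Fin p → ℝ) - Pi.single j 1 = (-1 : ℝ) • (Pi.single j 1 : Fin p → ℝ) := by
        funext i; simp
      rwa [he]
    have hsm := hM1 0 (Pi.single j 1) h0 hsingle hsub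
    have hexp := expandL X y lam2 0 (Pi.single j 1)
    simp only [zero_add] at hexp
    rw [← hL] at hexp
    simp only [Pi.zero_apply, sub_zero] at hsm
    rw [hexp] at hsm
    rw [hs1] at hsm ⊢
    linarith
  -- gap ≥ g_j^2 / (2 M1)
  have hgj : ∀ j : Fin p, g j ^ 2 / (2 * M1) ≤ gap := by
    intro j
    set α := -(g j) / M1 with hα
    have hle := hinfle j α
    have hexp := expandL X y lam2 β (α • (Pi.single j 1 : Fin p → ℝ))
    rw [← hL, ← hg] at hexp
    have hdot : g ⬝ᵥ (α • (Pi.single j 1 : Fin p → ℝ)) = α * g j := by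
      simp [dotProduct, Pi.single_apply, Finset.mul_sum, mul_comm]
    have hquad : (α • (Pi.single j 1 : Fin p → ℝ)) ⬝ᵥ (Xᵀ * X).mulVec
          (α • (Pi.single j 1 : Fin p → ℝ))
        + lam2 * ∑ i, ((α • (Pi.single j 1 : Fin p → ℝ)) i) ^ 2
        = α ^ 2 * ((Pi.single j 1 : Fin p → ℝ) ⬝ᵥ (Xᵀ * X).mulVec (Pi.single j 1)
          + lam2 * ∑ i, ((Pi.single j 1 : Fin p → ℝ) i) ^ 2) := by
      rw [Matrix.mulVec_smul]
      simp only [smul_dotProduct, dotProduct_smul, smul_eq_mul, Pi.smul_apply, mul_pow]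
      rw [← Finset.mul_sum]
      ring
    have hq2 : α ^ 2 * ((Pi.single j 1 : Fin p → ℝ) ⬝ᵥ (Xᵀ * X).mulVec (Pi.single j 1)
        + lam2 * ∑ i, ((Pi.single j 1 : Fin p → ℝ) i) ^ 2) ≤ α ^ 2 * (M1 / 2) :=
      mul_le_mul_of_nonneg_left (hQ j) (sq_nonneg α)
    rw [hexp, hquad] at hle
    rw [hdot] at hle
    have hval : α * g j + α ^ 2 * (M1 / 2) = -(g j ^ 2 / (2 * M1)) := by
      rw [hα]; field_simp; ring
    have : inf ≤ L β - g j ^ 2 / (2 * M1) := by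
      calc inf ≤ L β + α * g j + α ^ 2 * (M1 / 2) := by linarith
        _ = L β - g j ^ 2 / (2 * M1) := by rw [add_assoc, hval]; ring
    linarith
  -- g_j^2 ≤ 2 M1 gap
  have hgsq : ∀ j : Fin p, g j ^ 2 ≤ 2 * M1 * gap := by
    intro j
    have := hgj j
    rw [div_le_iff₀ (by linarith)] at this
    linarith
  -- RSC applied to (β, βstar)
  have h2k : ∀ γ : Fin p → ℝ, (Function.support γ).ncard ≤ k →
      (Function.support γ).ncard ≤ 2 * k := fun γ h => h.trans (by omega)
  have hsubsupp : (Function.support (β - βstar)).ncard ≤ 2 * k := by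
    have hsub : Function.support (β - βstar) ⊆
        Function.support β ∪ Function.support βstar := by
      intro x hx
      simp only [Function.mem_support, Pi.sub_apply, ne_eq] at hx
      by_contra hc
      simp only [Set.mem_union, Function.mem_support, not_or, not_not] at hc
      rw [hc.1, hc.2, sub_zero] at hx
      exact hx rfl
    calc (Function.support (β - βstar)).ncard
        ≤ (Function.support β ∪ Function.support βstar).ncard :=
          Set.ncard_le_ncard hsub (Set.toFinite _)
      _ ≤ (Function.support β).ncard + (Function.support βstar).ncard :=
          Set.ncard_union_le _ _
      _ ≤ 2 * k := by omega
  have hrscβ := hrsc β βstar (h2k β hβ) (h2k βstar hβstar) hsubsupp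
  rw [← hg] at hrscβ
  -- termwise bound
  set C := M1 / m2k * gap with hC
  have hCnn : 0 ≤ C := mul_nonneg (div_nonneg hM1pos.le hm2kpos.le) hgap0
  have hterm : ∀ j : Fin p,
      (if βstar j ≠ 0 then -C else 0)
        ≤ g j * (βstar j - β j) + m2k / 2 * (βstar j - β j) ^ 2 := by
    intro j
    by_cases hb : β j ≠ 0
    · rw [hstat j hb]
      have h1 : (0:ℝ) ≤ m2k / 2 * (βstar j - β j) ^ 2 :=
        mul_nonneg (by linarith) (sq_nonneg _)
      split <;> simp <;> linarith
    · push_neg at hb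
      by_cases hbs : βstar j ≠ 0
      · rw [if_pos hbs]
        have hstep : -(2 * M1 * gap)
            ≤ 2 * m2k * (g j * (βstar j - β j) + m2k / 2 * (βstar j - β j) ^ 2) := by
          nlinarith [sq_nonneg (m2k * (βstar j - β j) + g j), hgsq j]
        have he : -C = (-(2 * M1 * gap)) / (2 * m2k) := by
          rw [hC]; field_simp
        rw [he, div_le_iff₀ (by linarith)]
        nlinarith [hstep]
      · push_neg at hbs
        rw [if_neg (by simp [hbs]), hb, hbs]
        simp
  -- sum it up
  have hdot2 : g ⬝ᵥ (βstar - β) + m2k / 2 * ∑ j, (βstar j - β j) ^ 2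
      = ∑ j, (g j * (βstar j - β j) + m2k / 2 * (βstar j - β j) ^ 2) := by
    simp only [dotProduct, Pi.sub_apply, Finset.sum_add_distrib, Finset.mul_sum]
  have hsumlb : -((k:ℝ) * C) ≤ ∑ j, (g j * (βstar j - β j) + m2k / 2 * (βstar j - β j) ^ 2) := by
    have h1 : ∑ j, (if βstar j ≠ 0 then -C else (0:ℝ))
        ≤ ∑ j, (g j * (βstar j - β j) + m2k / 2 * (βstar j - β j) ^ 2) :=
      Finset.sum_le_sum fun j _ => hterm j
    have h2 : ∑ j, (if βstar j ≠ 0 then -C else (0:ℝ))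
        = ((Finset.univ.filter fun j => βstar j ≠ 0).card : ℝ) * (-C) := by
      rw [Finset.sum_ite, Finset.sum_const, Finset.sum_const_zero, add_zero, nsmul_eq_mul]
    have h3 : (Finset.univ.filter fun j => βstar j ≠ 0).card
        = (Function.support βstar).ncard := by
      have hset : Function.support βstar = ↑(Finset.univ.filter fun j => βstar j ≠ 0) := by
        ext j; simp [Function.mem_support]
      rw [hset, Set.ncard_coe_finset]
    have h4 : ((Finset.univ.filter fun j => βstar j ≠ 0).card : ℝ) * C ≤ (k:ℝ) * C := by
      apply mul_le_mul_of_nonneg_right _ hCnn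
      rw [h3]
      exact_mod_cast hβstar
    calc -((k:ℝ) * C) ≤ ((Finset.univ.filter fun j => βstar j ≠ 0).card : ℝ) * (-C) := by
          rw [mul_neg, neg_le_neg_iff]; exact h4
      _ ≤ _ := by rw [← h2]; exact h1
  -- combine
  have hmain : L β - L βstar ≤ (k:ℝ) * C := by
    linarith [hrscβ, hsumlb, hdot2]
  have hkpos : (0:ℝ) < (k:ℝ) := by exact_mod_cast hk
  have hfinal : m2k / ((k:ℝ) * M1) * ((k:ℝ) * C) = gap := by
    rw [hC]
    field_simp
  calc m2k / ((k:ℝ) * M1) * (L β - L βstar)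
      ≤ m2k / ((k:ℝ) * M1) * ((k:ℝ) * C) := by
        apply mul_le_mul_of_nonneg_left hmain
        positivity
    _ = gap := hfinal
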